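/- Let ℓ and p be distinct primes and q ∈ ℚ_p^× with v_p(q) > 0. The group ℚ_p^×/q^ℤ contains an element of order ℓ if and only if p ≡ 1 (mod ℓ) or q is an ℓ-th power in ℚ_p^×. -/

import Mathlib

/-!
For `q` of infinite order in an abelian group `G` and `ℓ` prime, a class `x q^ℤ` of order `ℓ`
satisfies `x ^ ℓ = q ^ m`: if `ℓ ∣ m` then `x q^(-m/ℓ)` is a nontrivial `ℓ`-torsion element of
`G`, otherwise Bézout makes `q` an `ℓ`-th power; conversely both kinds of elements give classes of
order `ℓ` because `q^ℤ ≅ ℤ` is torsion-free and `ℓ ∤ 1`. Since `v_p(q) > 0`, `q` has infinite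
order in `ℚ_p^×`. Finally, torsion in `ℚ_p^×` has norm one, so lies in `ℤ_p`; reduction mod `p`
preserves orders prime to `p` (a geometric-sum argument), and every element of `𝔽_p^×` lifts to a
root of unity of the same order (Hensel's lemma for `X ^ n - 1`). The cyclic group `𝔽_p^×` of
order `p - 1` has an element of order `ℓ` iff `ℓ ∣ p - 1`.
-/

open Polynomial

section QuotientZPowers

variable {G : Type*} [CommGroup G] {q : G} {ℓ : ℕ}

theorem exists_orderOf_eq_or_pow_eq_of_orderOf_mk_eq (hℓ : ℓ.Prime) {x : G}
    (hx : orderOf (x : G ⧸ Subgroup.zpowers q) = ℓ) :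
    (∃ ζ : G, orderOf ζ = ℓ) ∨ ∃ y : G, y ^ ℓ = q := by
  have := Fact.mk hℓ
  obtain ⟨hpow, hne⟩ := orderOf_eq_prime_iff.mp hx
  rw [← QuotientGroup.mk_pow, QuotientGroup.eq_one_iff, Subgroup.mem_zpowers_iff] at hpow
  rw [Ne, QuotientGroup.eq_one_iff] at hne
  obtain ⟨m, hm⟩ := hpow
  by_cases hdvd : (ℓ : ℤ) ∣ m
  · obtain ⟨c, rfl⟩ := hdvd
    refine Or.inl ⟨x * (q ^ c)⁻¹, orderOf_eq_prime_iff.mpr ⟨?_, ?_⟩⟩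
    · rw [mul_pow, inv_pow, ← zpow_natCast (q ^ c), ← zpow_mul, mul_comm c, hm, mul_inv_cancel]
    · rw [Ne, mul_inv_eq_one]
      rintro rfl
      exact hne (zpow_mem (Subgroup.mem_zpowers q) c)
  · -- Bézout: `a ℓ + b m = 1` makes `q ^ a * x ^ b` an `ℓ`-th root of `q`.
    obtain ⟨a, b, hab⟩ := (Nat.prime_iff_prime_int.mp hℓ).coprime_iff_not_dvd.mpr hdvd
    refine Or.inr ⟨q ^ a * x ^ b, ?_⟩
    rw [← zpow_natCast, mul_zpow, ← zpow_mul, ← zpow_mul, mul_comm b, zpow_mul x, zpow_natCast,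
      ← hm, ← zpow_mul, ← zpow_add, mul_comm m, hab, zpow_one]

theorem orderOf_mk_eq_of_orderOf_eq (hq : ¬IsOfFinOrder q) (hℓ : ℓ.Prime) {ζ : G}
    (hζ : orderOf ζ = ℓ) : orderOf (ζ : G ⧸ Subgroup.zpowers q) = ℓ := by
  have := Fact.mk hℓ
  obtain ⟨hpow, hne⟩ := orderOf_eq_prime_iff.mp hζ
  refine orderOf_eq_prime_iff.mpr ⟨by rw [← QuotientGroup.mk_pow, hpow, QuotientGroup.mk_one], ?_⟩
  rw [Ne, QuotientGroup.eq_one_iff, Subgroup.mem_zpowers_iff]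
  rintro ⟨k, rfl⟩
  have hk : k * ℓ = 0 := injective_zpow_iff_not_isOfFinOrder.mpr hq <| by
    simp only [zpow_zero, zpow_mul, zpow_natCast, hpow]
  simp [hℓ.ne_zero] at hk
  simp [hk] at hne

theorem orderOf_mk_eq_of_pow_eq (hq : ¬IsOfFinOrder q) (hℓ : ℓ.Prime) {y : G}
    (hy : y ^ ℓ = q) : orderOf (y : G ⧸ Subgroup.zpowers q) = ℓ := by
  have := Fact.mk hℓ
  refine orderOf_eq_prime_iff.mpr ⟨?_, ?_⟩
  · rw [← QuotientGroup.mk_pow, hy, QuotientGroup.eq_one_iff]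
    exact Subgroup.mem_zpowers q
  · rw [Ne, QuotientGroup.eq_one_iff, Subgroup.mem_zpowers_iff]
    rintro ⟨k, rfl⟩
    have hk : k * ℓ = 1 := injective_zpow_iff_not_isOfFinOrder.mpr hq <| by
      simp only [zpow_one, zpow_mul, zpow_natCast, hy]
    exact hℓ.not_isUnit (Int.ofNat_isUnit.mp (.of_mul_eq_one_right k hk))

theorem exists_orderOf_quotient_zpowers_eq_prime_iff (hq : ¬IsOfFinOrder q) (hℓ : ℓ.Prime) :
    (∃ x : G ⧸ Subgroup.zpowers q, orderOf x = ℓ) ↔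
      (∃ ζ : G, orderOf ζ = ℓ) ∨ ∃ y : G, y ^ ℓ = q := by
  constructor
  · rintro ⟨x, hx⟩
    induction x using QuotientGroup.induction_on with
    | H x => exact exists_orderOf_eq_or_pow_eq_of_orderOf_mk_eq hℓ hx
  · rintro (⟨ζ, hζ⟩ | ⟨y, hy⟩)
    · exact ⟨ζ, orderOf_mk_eq_of_orderOf_eq hq hℓ hζ⟩
    · exact ⟨y, orderOf_mk_eq_of_pow_eq hq hℓ hy⟩

end QuotientZPowers

theorem exists_orderOf_units_eq_iff {M : Type*} [Monoid M] {n : ℕ} (hn : n ≠ 0) :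
    (∃ u : Mˣ, orderOf u = n) ↔ ∃ x : M, orderOf x = n := by
  constructor
  · rintro ⟨u, hu⟩
    exact ⟨u, orderOf_units.trans hu⟩
  · rintro ⟨x, hx⟩
    have hfin : IsOfFinOrder x := orderOf_ne_zero_iff.mp (hx ▸ hn)
    exact ⟨hfin.unit, orderOf_units.symm.trans hx⟩

namespace PadicInt

variable {p : ℕ} [Fact p.Prime]

theorem toZMod_eq_zero_iff_norm_lt_one (x : ℤ_[p]) : toZMod x = 0 ↔ ‖x‖ < 1 := by
  rw [← RingHom.mem_ker, ker_toZMod, IsLocalRing.mem_maximalIdeal, mem_nonunits_iff,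
    not_isUnit_iff]

theorem norm_eq_one_iff_toZMod_ne_zero (x : ℤ_[p]) : ‖x‖ = 1 ↔ toZMod x ≠ 0 := by
  rw [Ne, toZMod_eq_zero_iff_norm_lt_one, not_lt]
  exact ⟨ge_of_eq, (norm_le_one x).antisymm⟩

theorem toZMod_eq_toZMod_iff (x y : ℤ_[p]) : toZMod x = toZMod y ↔ ‖x - y‖ < 1 := by
  rw [← sub_eq_zero, ← map_sub, toZMod_eq_zero_iff_norm_lt_one]

theorem exists_eval_eq_zero_toZMod_eq {F : ℤ_[p][X]} {a : ℤ_[p]}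
    (hFa : toZMod (F.eval a) = 0) (hF'a : toZMod (F.derivative.eval a) ≠ 0) :
    ∃ z : ℤ_[p], F.eval z = 0 ∧ toZMod z = toZMod a := by
  rw [toZMod_eq_zero_iff_norm_lt_one] at hFa
  rw [← norm_eq_one_iff_toZMod_ne_zero] at hF'a
  obtain ⟨z, hz, hza, -⟩ := hensels_lemma (F := F) (a := a)
    (by simpa only [coe_aeval_eq_eval, hF'a, one_pow] using hFa)
  rw [coe_aeval_eq_eval, hF'a] at hza
  exact ⟨z, by rwa [coe_aeval_eq_eval] at hz, (toZMod_eq_toZMod_iff z a).mpr hza⟩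

theorem eq_one_of_pow_eq_one_of_toZMod_eq_one {n : ℕ} (hn : (n : ZMod p) ≠ 0) {x : ℤ_[p]}
    (hx : x ^ n = 1) (h1 : toZMod x = 1) : x = 1 := by
  by_contra hx1
  -- `x ≠ 1` kills the geometric sum, whose reduction is `n`.
  have hsum : ∑ i ∈ Finset.range n, x ^ i = 0 := by
    refine (mul_eq_zero.mp ?_).resolve_right (sub_ne_zero.mpr hx1)
    rw [geom_sum_mul, hx, sub_self]
  apply hn
  simpa [h1] using congrArg toZMod hsum

theorem orderOf_toZMod_of_pow_eq_one {n : ℕ} (hn : (n : ZMod p) ≠ 0) {x : ℤ_[p]}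
    (hx : x ^ n = 1) : orderOf (toZMod x) = orderOf x := by
  refine Nat.dvd_antisymm (orderOf_map_dvd toZMod.toMonoidHom x) (orderOf_dvd_of_pow_eq_one ?_)
  refine eq_one_of_pow_eq_one_of_toZMod_eq_one hn ?_ ?_
  · rw [← pow_mul, mul_comm, pow_mul, hx, one_pow]
  · rw [map_pow, pow_orderOf_eq_one]

theorem exists_pow_eq_one_toZMod_eq {n : ℕ} (hn : (n : ZMod p) ≠ 0) {b : ZMod p}
    (hb : b ^ n = 1) : ∃ x : ℤ_[p], x ^ n = 1 ∧ toZMod x = b := by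
  have hb0 : b ≠ 0 := by
    rintro rfl
    exact hn (by simp_all [zero_pow_eq])
  obtain ⟨a, rfl⟩ := ZMod.ringHom_surjective toZMod b
  obtain ⟨x, hx, hxa⟩ := exists_eval_eq_zero_toZMod_eq (F := X ^ n - 1) (a := a)
    (by simp [hb]) (by simp [derivative_X_pow, hn, hb0])
  exact ⟨x, by simpa [sub_eq_zero] using hx, hxa⟩

theorem exists_orderOf_eq_iff {n : ℕ} (hn : (n : ZMod p) ≠ 0) :
    (∃ x : ℤ_[p], orderOf x = n) ↔ ∃ b : ZMod p, orderOf b = n := by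
  constructor
  · rintro ⟨x, rfl⟩
    exact ⟨toZMod x, orderOf_toZMod_of_pow_eq_one hn (pow_orderOf_eq_one x)⟩
  · rintro ⟨b, rfl⟩
    obtain ⟨x, hx, rfl⟩ := exists_pow_eq_one_toZMod_eq hn (pow_orderOf_eq_one b)
    exact ⟨x, (orderOf_toZMod_of_pow_eq_one hn hx).symm⟩

theorem orderOf_coe (x : ℤ_[p]) : orderOf (x : ℚ_[p]) = orderOf x :=
  orderOf_injective Coe.ringHom.toMonoidHom Subtype.val_injective x

end PadicInt

theorem ZMod.exists_orderOf_eq_iff_dvd {p : ℕ} [Fact p.Prime] {n : ℕ} (hn : n ≠ 0) :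
    (∃ b : ZMod p, orderOf b = n) ↔ n ∣ p - 1 := by
  rw [← exists_orderOf_units_eq_iff hn]
  constructor
  · rintro ⟨u, rfl⟩
    exact ZMod.orderOf_units_dvd_card_sub_one u
  · intro hdvd
    obtain ⟨g, hg⟩ := IsCyclic.exists_ofOrder_eq_natCard (α := (ZMod p)ˣ)
    rw [Nat.card_eq_fintype_card, ZMod.card_units] at hg
    refine ⟨g ^ (orderOf g / n), orderOf_pow_orderOf_div ?_ (hg ▸ hdvd)⟩
    rw [hg]
    exact Nat.sub_ne_zero_of_lt (Fact.out : p.Prime).one_lt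

namespace Padic

variable {p : ℕ} [Fact p.Prime]

theorem exists_orderOf_eq_iff_padicInt {n : ℕ} (hn : n ≠ 0) :
    (∃ z : ℚ_[p], orderOf z = n) ↔ ∃ x : ℤ_[p], orderOf x = n := by
  constructor
  · rintro ⟨z, rfl⟩
    have hz : ‖z‖ = 1 := (orderOf_ne_zero_iff.mp hn).norm_eq_one
    exact ⟨⟨z, hz.le⟩, (PadicInt.orderOf_coe _).symm⟩
  · rintro ⟨x, rfl⟩
    exact ⟨x, PadicInt.orderOf_coe x⟩

theorem exists_orderOf_units_eq_iff_dvd {n : ℕ} (hn : (n : ZMod p) ≠ 0) :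
    (∃ ζ : ℚ_[p]ˣ, orderOf ζ = n) ↔ n ∣ p - 1 := by
  have hn0 : n ≠ 0 := by rintro rfl; exact hn Nat.cast_zero
  rw [exists_orderOf_units_eq_iff hn0, exists_orderOf_eq_iff_padicInt hn0,
    PadicInt.exists_orderOf_eq_iff hn, ZMod.exists_orderOf_eq_iff_dvd hn0]

theorem not_isOfFinOrder_of_valuation_pos {q : ℚ_[p]ˣ} (hq : 0 < (q : ℚ_[p]).valuation) :
    ¬IsOfFinOrder q := by
  intro hfin
  have hnorm : ‖(q : ℚ_[p])‖ = 1 := ((Units.coeHom ℚ_[p]).isOfFinOrder hfin).norm_eq_one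
  rw [norm_eq_zpow_neg_valuation q.ne_zero, zpow_eq_one_iff_right₀ (Nat.cast_nonneg p)
    (Nat.cast_ne_one.mpr (Fact.out : p.Prime).ne_one)] at hnorm
  omega

end Padic

theorem stmt_14 (ℓ p : ℕ) (hℓ : ℓ.Prime) [Fact p.Prime] (hne : ℓ ≠ p)
    (q : ℚ_[p]ˣ) (hq : 0 < (q : ℚ_[p]).valuation) :
    (∃ x : ℚ_[p]ˣ ⧸ Subgroup.zpowers q, orderOf x = ℓ) ↔
      (p % ℓ = 1 ∨ ∃ y : ℚ_[p]ˣ, y ^ ℓ = q) := by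
  have hℓp : (ℓ : ZMod p) ≠ 0 := by
    rw [Ne, ZMod.natCast_eq_zero_iff]
    exact fun h ↦ hne ((Nat.prime_dvd_prime_iff_eq Fact.out hℓ).mp h).symm
  have hmod : p % ℓ = 1 ↔ ℓ ∣ p - 1 := by
    rw [← Nat.modEq_iff_dvd' (Fact.out : p.Prime).one_le, Nat.ModEq, Nat.mod_eq_of_lt hℓ.one_lt,
      eq_comm]
  rw [exists_orderOf_quotient_zpowers_eq_prime_iff (Padic.not_isOfFinOrder_of_valuation_pos hq) hℓ,
    Padic.exists_orderOf_units_eq_iff_dvd hℓp, hmod]
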